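/- arXiv:1809.06435 — 2 statements merged into one kernel-verified Lean document; each statement's English description precedes it below -/
import Mathlib

section
/- Let A be a maximal cyclic subgroup of a free group F_n of finite rank, and let p be any prime. Then A is closed in the pro-p topology on F_n: for every x ∈ F_n with x ∉ A, there is a finite p-group P and a homomorphism φ : F_n → P with φ(x) ∉ φ(A). -/
/-!
If `x ∉ A`, then `x` does not commute with `a`: two commuting elements of a free group generate
a free abelian, hence cyclic, subgroup `⟨w⟩`, and maximality of `A` forces `⟨w⟩ = A ∋ x`.
So the commutator `⁅x, a⁆` is nontrivial, and since free groups are residually `p` some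
`φ : F_n → P` onto a finite `p`-group keeps `φ ⁅x, a⁆ ≠ 1`. Every element of `φ(A)` commutes
with `φ a`, hence `φ x ∉ φ(A)`.

Residual `p`-finiteness: by ping-pong on `ℤ²`, conjugates of the lower transvection by `p`
under powers of the upper one freely generate a subgroup of the congruence subgroup `Γ(p)`
of `SL(2, ℤ)`. The image of `Γ(p)` in `SL(2, ℤ/p^(m+1))` is a `p`-group, because
`(1 + pB)^(p^m) ≡ 1 mod p^(m+1)`, and a nontrivial element of `SL(2, ℤ)` survives modulo
`p^(m+1)` for `m` large.
-/

open Matrix Matrix.SpecialLinearGroup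
open scoped MatrixGroups Pointwise Polynomial

namespace Matrix.SpecialLinearGroup

variable {ι F : Type*} [DecidableEq ι] [Fintype ι] [CommRing F]

lemma transvection_zpow {i j : ι} (hij : i ≠ j) (b : F) (k : ℤ) :
    transvection hij b ^ k = transvection hij (k * b) := by
  induction k using Int.induction_on with
  | zero => simp
  | succ k ih => rw [_root_.zpow_add_one, ih, ← transvection_add]; push_cast; ring_nf
  | pred k ih =>
    rw [_root_.zpow_sub_one, ih, transvection_inv, ← transvection_add]; push_cast; ring_nf

lemma transvection_smul {i j : ι} (hij : i ≠ j) (b : F) (v : ι → F) :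
    transvection hij b • v = v + Pi.single i (b * v j) := by
  simp [SpecialLinearGroup.smul_def, transvection_coe, add_mulVec, single_mulVec, Pi.single]

end Matrix.SpecialLinearGroup

section PingPong

variable {R : Type*} [CommRing R] [LinearOrder R] [IsStrictOrderedRing R]

lemma abs_lt_abs_add_mul {a b c : R} (hab : |a| < |b|) (hc : 2 ≤ |c|) : |b| < |a + c * b| := by
  have h := abs_sub_abs_le_abs_add (c * b) a
  rw [abs_mul, add_comm] at h
  nlinarith [abs_nonneg b]

abbrev upperTransvection (b : R) : SL(2, R) := transvection (zero_ne_one' (Fin 2)) b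

abbrev lowerTransvection (b : R) : SL(2, R) := transvection (one_ne_zero' (Fin 2)) b

variable (R) in
def fstDominant : Set (Fin 2 → R) := {v | |v 1| < |v 0|}

variable (R) in
def sndDominant : Set (Fin 2 → R) := {v | |v 0| < |v 1|}

lemma upperTransvection_smul_sndDominant {b : R} (hb : 2 ≤ |b|) :
    upperTransvection b • sndDominant R ⊆ fstDominant R := by
  rintro _ ⟨v, hv, rfl⟩
  simpa [fstDominant, transvection_smul] using abs_lt_abs_add_mul hv hb

lemma lowerTransvection_smul_fstDominant {b : R} (hb : 2 ≤ |b|) :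
    lowerTransvection b • fstDominant R ⊆ sndDominant R := by
  rintro _ ⟨v, hv, rfl⟩
  simpa [sndDominant, transvection_smul, add_comm] using abs_lt_abs_add_mul hv hb

lemma two_le_abs_mul_of_ne_zero {k b : ℤ} (hk : k ≠ 0) (hb : 2 ≤ |b|) : 2 ≤ |k * b| := by
  rw [abs_mul]
  nlinarith [Int.one_le_abs hk]

lemma upperTransvection_eq_mul_sub (b k j : ℤ) :
    upperTransvection (j * b) = upperTransvection (k * b) * upperTransvection ((j - k) * b) := by
  rw [← transvection_add]; ring_nf

lemma conj_lowerTransvection_smul_subset {b k j n : ℤ} (hb : 2 ≤ |b|) (hkj : k ≠ j)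
    (hn : n ≠ 0) :
    MulAut.conj (upperTransvection (k * b)) (lowerTransvection (n * b)) •
        upperTransvection (j * b) • sndDominant ℤ ⊆ upperTransvection (k * b) • sndDominant ℤ := by
  rw [MulAut.conj_apply, upperTransvection_eq_mul_sub b k j, mul_smul, mul_smul, mul_smul,
    inv_smul_smul]
  refine Set.smul_set_mono ((Set.smul_set_mono (upperTransvection_smul_sndDominant ?_)).trans
    (lowerTransvection_smul_fstDominant (two_le_abs_mul_of_ne_zero hn hb)))
  exact two_le_abs_mul_of_ne_zero (sub_ne_zero.2 hkj.symm) hb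

lemma disjoint_upperTransvection_smul_sndDominant {b k j : ℤ} (hb : 2 ≤ |b|) (hkj : k ≠ j) :
    Disjoint (upperTransvection (k * b) • sndDominant ℤ)
      (upperTransvection (j * b) • sndDominant ℤ) := by
  rw [upperTransvection_eq_mul_sub b k j, mul_smul, Set.disjoint_smul_set]
  have hC : Disjoint (sndDominant ℤ) (fstDominant ℤ) :=
    Set.disjoint_left.2 fun _ h₁ h₂ => lt_asymm (α := ℤ) h₁ h₂
  exact hC.mono_right
    (upperTransvection_smul_sndDominant (two_le_abs_mul_of_ne_zero (sub_ne_zero.2 hkj.symm) hb))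

open Monoid in
theorem injective_lift_conj_lowerTransvection {b : ℤ} (hb : 2 ≤ |b|) :
    Function.Injective (FreeGroup.lift fun k : ℤ =>
      MulAut.conj (upperTransvection (k * b)) (lowerTransvection b)) := by
  set a := fun k : ℤ => MulAut.conj (upperTransvection (k * b)) (lowerTransvection b)
  have hlift : FreeGroup.lift a = (CoprodI.lift fun k => FreeGroup.lift fun _ : Unit => a k).comp
      freeGroupEquivCoprodI.toMonoidHom := by
    ext; simp
  rw [hlift, MonoidHom.coe_comp]
  refine Function.Injective.comp ?_ freeGroupEquivCoprodI.injective
  refine CoprodI.lift_injective_of_ping_pong _ (Or.inl (by simp))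
    (fun k => upperTransvection (k * b) • sndDominant ℤ)
    (fun k => ⟨_, Set.smul_mem_smul_set (a := upperTransvection (k * b)) (b := ![0, 1])
      (by simp [sndDominant])⟩)
    (fun k j hkj => disjoint_upperTransvection_smul_sndDominant hb hkj) ?_
  intro k j hkj h hh
  obtain ⟨n, rfl⟩ : ∃ n : ℤ, FreeGroup.of () ^ n = h :=
    ⟨_, FreeGroup.freeGroupUnitEquivInt.symm_apply_apply h⟩
  have hn : n ≠ 0 := by rintro rfl; exact hh (zpow_zero _)
  change (FreeGroup.lift fun _ => a k) (FreeGroup.of () ^ n) • upperTransvection (j * b) •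
    sndDominant ℤ ⊆ upperTransvection (k * b) • sndDominant ℤ
  rw [map_zpow, FreeGroup.lift_apply_of, ← map_zpow (MulAut.conj _), transvection_zpow]
  exact conj_lowerTransvection_smul_subset hb hkj hn

end PingPong

theorem exists_one_add_nsmul_pow_pow {R : Type*} [Ring R] (p k : ℕ) (B : R) :
    ∃ C : R, (1 + p • B) ^ p ^ k = 1 + p ^ (k + 1) • C := by
  -- `dvd_sub_pow_of_dvd_sub` needs commutativity: apply it in `ℤ[X]` and evaluate at `B`.
  obtain ⟨C, hC⟩ := dvd_sub_pow_of_dvd_sub (R := ℤ[X]) (p := p)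
    (a := 1 + (p : ℤ[X]) * Polynomial.X) (b := 1) (by simp) k
  refine ⟨Polynomial.aeval B C, ?_⟩
  simpa [sub_eq_iff_eq_add', nsmul_eq_mul] using congrArg (Polynomial.aeval B) hC

namespace CongruenceSubgroup

lemma mem_Gamma_iff_dvd {N : ℕ} {γ : SL(2, ℤ)} :
    γ ∈ Γ(N) ↔ ∀ i j, (N : ℤ) ∣ γ i j - (1 : Matrix (Fin 2) (Fin 2) ℤ) i j := by
  simp [Fin.forall_fin_two, ← ZMod.intCast_zmod_eq_zero_iff_dvd, sub_eq_zero, and_assoc]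

lemma mem_Gamma_iff_exists_eq_one_add_nsmul {N : ℕ} {γ : SL(2, ℤ)} :
    γ ∈ Γ(N) ↔ ∃ B : Matrix (Fin 2) (Fin 2) ℤ, (γ : Matrix (Fin 2) (Fin 2) ℤ) = 1 + N • B := by
  rw [mem_Gamma_iff_dvd]
  constructor
  · intro h
    choose B hB using h
    exact ⟨Matrix.of B, by ext i j; simp [← hB]⟩
  · rintro ⟨B, hB⟩ i j
    exact ⟨B i j, by
      rw [hB, Matrix.add_apply, Matrix.smul_apply, nsmul_eq_mul, add_sub_cancel_left]⟩

lemma transvection_mem_Gamma {N : ℕ} {i j : Fin 2} (hij : i ≠ j) {b : ℤ} (hb : (N : ℤ) ∣ b) :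
    transvection hij b ∈ Γ(N) := by
  rw [mem_Gamma_iff_dvd]
  intro k l
  simp only [transvection_coe, Matrix.add_apply, add_sub_cancel_left, single_apply]
  split_ifs <;> simp [hb]

lemma pow_pow_mem_Gamma_pow {p : ℕ} {γ : SL(2, ℤ)} (hγ : γ ∈ Γ(p)) (k : ℕ) :
    γ ^ p ^ k ∈ Γ(p ^ (k + 1)) := by
  obtain ⟨B, hB⟩ := mem_Gamma_iff_exists_eq_one_add_nsmul.1 hγ
  obtain ⟨C, hC⟩ := exists_one_add_nsmul_pow_pow p k B
  exact mem_Gamma_iff_exists_eq_one_add_nsmul.2 ⟨C, by rw [coe_pow, hB, hC]⟩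

lemma exists_not_mem_Gamma_pow {γ : SL(2, ℤ)} (hγ : γ ≠ 1) {p : ℕ} (hp : 2 ≤ p) :
    ∃ m, γ ∉ Γ(p ^ (m + 1)) := by
  obtain ⟨i, j, hij⟩ : ∃ i j, γ i j - (1 : Matrix (Fin 2) (Fin 2) ℤ) i j ≠ 0 := by
    by_contra! h
    exact hγ (Subtype.ext (Matrix.ext fun i j => sub_eq_zero.1 (h i j)))
  set c := γ i j - (1 : Matrix (Fin 2) (Fin 2) ℤ) i j
  refine ⟨c.natAbs, fun hmem => hij (Int.eq_zero_of_dvd_of_natAbs_lt_natAbs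
    (mem_Gamma_iff_dvd.1 hmem i j) ?_)⟩
  rw [Int.natAbs_natCast]
  exact (Nat.lt_pow_self hp).trans (Nat.pow_lt_pow_right hp (Nat.lt_succ_self _))

lemma isPGroup_map_Gamma (p m : ℕ) :
    IsPGroup p ((Γ(p)).map (SpecialLinearGroup.map (Int.castRingHom (ZMod (p ^ (m + 1)))))) := by
  rintro ⟨_, γ, hγ, rfl⟩
  exact ⟨m, Subtype.ext <| by
    rw [SubgroupClass.coe_pow, ← map_pow]; exact pow_pow_mem_Gamma_pow hγ m⟩

end CongruenceSubgroup

open CongruenceSubgroup in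
theorem FreeGroup.exists_isPGroup_hom_ne_one {ι : Type*} [Countable ι] {p : ℕ} (hp : 2 ≤ p)
    {g : FreeGroup ι} (hg : g ≠ 1) :
    ∃ (P : Type) (_ : Group P) (_ : Finite P), IsPGroup p P ∧
      ∃ φ : FreeGroup ι →* P, φ g ≠ 1 := by
  obtain ⟨f, hf⟩ := Countable.exists_injective_nat ι
  set ψ : FreeGroup ι →* SL(2, ℤ) := (FreeGroup.lift fun k : ℤ =>
      MulAut.conj (upperTransvection (k * p)) (lowerTransvection (p : ℤ))).comp
    (FreeGroup.map fun i => (f i : ℤ))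
  have hψ : Function.Injective ψ :=
    (injective_lift_conj_lowerTransvection (by simpa using hp)).comp
      (FreeGroup.map_injective (Nat.cast_injective.comp hf))
  have hψΓ : ∀ x, ψ x ∈ Γ(p) := fun x => FreeGroup.range_lift_le (by
    rintro _ ⟨k, rfl⟩
    have hU := transvection_mem_Gamma (zero_ne_one' (Fin 2)) (dvd_mul_left (p : ℤ) k)
    have hL := transvection_mem_Gamma (one_ne_zero' (Fin 2)) (dvd_refl (p : ℤ))
    exact mul_mem (mul_mem hU hL) (inv_mem hU)) ⟨_, rfl⟩
  obtain ⟨m, hm⟩ := exists_not_mem_Gamma_pow ((map_ne_one_iff ψ hψ).2 hg) hp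
  have : NeZero (p ^ (m + 1)) := ⟨by positivity⟩
  set π := SpecialLinearGroup.map (n := Fin 2) (Int.castRingHom (ZMod (p ^ (m + 1))))
  refine ⟨(Γ(p)).map π, inferInstance, inferInstance, isPGroup_map_Gamma p m,
    (π.comp ψ).codRestrict _ fun x => ⟨ψ x, hψΓ x, rfl⟩, fun h => hm ?_⟩
  exact congrArg Subtype.val h

lemma FreeGroup.not_commute_of_ne {α : Type*} {s t : α} (hst : s ≠ t) :
    ¬Commute (of s) (of t) := fun h => by
  classical
  have := h.map (FreeGroup.lift fun u : α =>
    if u = s then Equiv.swap (0 : Fin 3) 1 else Equiv.swap 1 2)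
  simp only [lift_apply_of, ite_true, if_neg hst.symm] at this
  exact absurd this.eq (by decide)

lemma FreeGroup.isCyclic_of_subsingleton {α : Type*} [Subsingleton α] :
    IsCyclic (FreeGroup α) := by
  rcases isEmpty_or_nonempty α with _ | ⟨⟨u⟩⟩
  · infer_instance
  · refine isCyclic_iff_exists_zpowers_eq_top.2 ⟨of u, ?_⟩
    rw [Subgroup.zpowers_eq_closure, ← closure_range_of,
      @Set.range_unique _ _ _ (uniqueOfSubsingleton u)]
    rfl

lemma IsFreeGroup.isCyclic_of_isMulCommutative {G : Type*} [Group G] [IsFreeGroup G]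
    [IsMulCommutative G] : IsCyclic G := by
  let e := IsFreeGroup.toFreeGroup G
  have : Subsingleton (IsFreeGroup.Generators G) := ⟨fun s t => by
    by_contra hst
    refine FreeGroup.not_commute_of_ne hst ?_
    simpa using (show Commute (e.symm (.of s)) (e.symm (.of t)) from mul_comm' _ _).map e⟩
  have := FreeGroup.isCyclic_of_subsingleton (α := IsFreeGroup.Generators G)
  exact isCyclic_of_surjective e.symm e.symm.surjective

lemma FreeGroup.exists_mem_zpowers_of_commute {α : Type*} {x y : FreeGroup α}
    (h : Commute x y) : ∃ w, x ∈ Subgroup.zpowers w ∧ y ∈ Subgroup.zpowers w := by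
  set H := Subgroup.closure {x, y}
  have hcomm : ∀ a ∈ ({x, y} : Set (FreeGroup α)), ∀ b ∈ ({x, y} : Set (FreeGroup α)),
      a * b = b * a := by
    simp only [Set.mem_insert_iff, Set.mem_singleton_iff]
    rintro a (rfl | rfl) b (rfl | rfl)
    exacts [rfl, h.eq, h.eq.symm, rfl]
  have := Subgroup.isMulCommutative_closure hcomm
  have := IsFreeGroup.isCyclic_of_isMulCommutative (G := H)
  obtain ⟨w, hw⟩ := IsCyclic.exists_generator (α := H)
  have hmem : ∀ z ∈ H, z ∈ Subgroup.zpowers (w : FreeGroup α) := fun z hz => by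
    obtain ⟨k, hk⟩ := hw ⟨z, hz⟩
    exact ⟨k, congrArg Subtype.val hk⟩
  exact ⟨w, hmem x (Subgroup.subset_closure (by simp)), hmem y (Subgroup.subset_closure (by simp))⟩

theorem stmt6 (n : ℕ) (p : ℕ) (hp : p.Prime)
    (a : FreeGroup (Fin n)) (A : Subgroup (FreeGroup (Fin n)))
    (hA : A = Subgroup.zpowers a)
    (hmax : ∀ e : FreeGroup (Fin n), A ≤ Subgroup.zpowers e →
      Subgroup.zpowers e = A) :
    ∀ x : FreeGroup (Fin n), x ∉ A →
      ∃ (P : Type) (_ : Group P) (_ : Finite P), IsPGroup p P ∧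
        ∃ φ : FreeGroup (Fin n) →* P, φ x ∉ A.map φ := by
  intro x hx
  have hxa : ¬Commute x a := fun hxa => by
    obtain ⟨w, hxw, haw⟩ := FreeGroup.exists_mem_zpowers_of_commute hxa
    exact hx (hmax w (hA ▸ Subgroup.zpowers_le.2 haw) ▸ hxw)
  obtain ⟨P, hG, hF, hP, φ, hφ⟩ := FreeGroup.exists_isPGroup_hom_ne_one hp.two_le
    (mt commutatorElement_eq_one_iff_commute.1 hxa)
  refine ⟨P, hG, hF, hP, φ, fun hφx => hφ ?_⟩
  rw [hA, MonoidHom.map_zpowers] at hφx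
  obtain ⟨k, hk⟩ := Subgroup.mem_zpowers_iff.1 hφx
  rw [map_commutatorElement, commutatorElement_eq_one_iff_commute, ← hk]
  exact (Commute.refl _).zpow_left k
end

section
/- Let p be a prime and R = (ℤ/pℤ)[t]/(1−t^p). Let M̂ and N̂ be free R-modules with bases (âᵢ)ᵢ and (b̂ⱼ)ⱼ, and let M and N be free (ℤ/pℤ)-modules with bases (aᵢ)ᵢ and (bⱼ)ⱼ of the same respective index sets. Let φ_M : M̂ → M and φ_N : N̂ → N be the (ℤ/pℤ)-linear maps determined by âᵢ ↦ aᵢ, b̂ⱼ ↦ bⱼ and t ↦ 1 (i.e., the maps induced by the augmentation t ↦ 1 on coefficients). Suppose f : M → N is (ℤ/pℤ)-linear, f̂ : M̂ → N̂ is R-linear, and φ_N ∘ f̂ = f ∘ φ_M. If f is injective, then f̂ is injective. -/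
/-!
Put `u = 1 - t`. The augmentation has kernel `u R`, `u ^ p = 0`, and `u ^ k * c = 0` with
`k < p` forces `u ∣ c`. Suppose `f̂ (u ^ k • x) = 0` with `k < p`. Every coordinate `c` of `f̂ x`
satisfies `u ^ k * c = 0`, so it lies in the kernel of the augmentation; hence
`f (φ_M x) = φ_N (f̂ x) = 0`, so `φ_M x = 0` and `x = u • y`, i.e. `u ^ k • x = u ^ (k + 1) • y`.
Descending induction from `k = p`, where `u ^ p = 0`, gives injectivity at `k = 0`.
-/

/-- The ring `(ℤ/pℤ)[t]/(1 - t^p)`. -/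
abbrev AugRing (p : ℕ) : Type :=
  Polynomial (ZMod p) ⧸ Ideal.span {(1 : Polynomial (ZMod p)) - Polynomial.X ^ p}

open Polynomial

theorem Polynomial.one_sub_X_dvd_iff {R : Type*} [CommRing R] {q : R[X]} :
    1 - X ∣ q ↔ q.eval 1 = 0 := by
  rw [← neg_dvd, neg_sub, ← C_1, dvd_iff_isRoot, IsRoot.def]

theorem Polynomial.one_sub_X_pow_char {R : Type*} [CommRing R] (p : ℕ) [Fact p.Prime] [CharP R p] :
    (1 - X : R[X]) ^ p = 1 - X ^ p := by
  rw [sub_pow_char, one_pow]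

namespace Module.Basis

variable {R S M N ι : Type*} [CommRing R] [Semiring S] {ε : R →+* S}
  [AddCommGroup M] [Module R M] [AddCommMonoid N] [Module S N]

theorem repr_map_of_map_basis (b : Basis ι R M) (c : Basis ι S N) (φ : M →ₛₗ[ε] N)
    (hφ : ∀ i, φ (b i) = c i) (x : M) (i : ι) : c.repr (φ x) i = ε (b.repr x i) := by
  classical
  suffices (Finsupp.lapply i ∘ₗ c.repr.toLinearMap) ∘ₛₗ φ =
      ε.toSemilinearMap ∘ₛₗ (Finsupp.lapply i ∘ₗ b.repr.toLinearMap) from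
    congr($this x)
  refine b.ext fun j => ?_
  simp [hφ, Finsupp.single_apply, apply_ite ε]

theorem map_eq_zero_iff_of_map_basis (b : Basis ι R M) (c : Basis ι S N) (φ : M →ₛₗ[ε] N)
    (hφ : ∀ i, φ (b i) = c i) (x : M) : φ x = 0 ↔ ∀ i, ε (b.repr x i) = 0 := by
  rw [← c.repr.map_eq_zero_iff, Finsupp.ext_iff]
  simp [repr_map_of_map_basis b c φ hφ]

theorem exists_eq_smul_of_forall_dvd_repr (b : Basis ι R M) {u : R} {x : M}
    (h : ∀ i, u ∣ b.repr x i) : ∃ y, x = u • y := by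
  choose d hd using h
  refine ⟨∑ i ∈ (b.repr x).support, d i • b i, ?_⟩
  conv_lhs => rw [← b.linearCombination_repr x]
  simp [Finsupp.linearCombination_apply, Finsupp.sum, Finset.smul_sum, smul_smul, hd]

end Module.Basis

theorem LinearMap.injective_of_injective_reduction {R S ι κ M N Mh Nh : Type*}
    [CommRing R] [Ring S]
    {ε : R →+* S} {u : R} {n : ℕ} (hker : ∀ c, ε c = 0 ↔ u ∣ c) (hnil : u ^ n = 0)
    (hann : ∀ k < n, ∀ c, u ^ k * c = 0 → u ∣ c)
    [AddCommGroup Mh] [Module R Mh] [AddCommGroup Nh] [Module R Nh]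
    [AddCommGroup M] [Module S M] [AddCommGroup N] [Module S N]
    (bMh : Module.Basis ι R Mh) (bNh : Module.Basis κ R Nh)
    (bM : Module.Basis ι S M) (bN : Module.Basis κ S N)
    (φM : Mh →ₛₗ[ε] M) (φN : Nh →ₛₗ[ε] N)
    (hφM : ∀ i, φM (bMh i) = bM i) (hφN : ∀ j, φN (bNh j) = bN j)
    (f : M →ₗ[S] N) (fh : Mh →ₗ[R] Nh) (hcomm : ∀ x, φN (fh x) = f (φM x))
    (hf : Function.Injective f) : Function.Injective fh := by
  rw [injective_iff_map_eq_zero]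
  suffices ∀ k ≤ n, ∀ x, fh (u ^ k • x) = 0 → u ^ k • x = 0 by simpa using this 0 n.zero_le
  intro k hk
  induction hk using Nat.decreasingInduction with
  | self => simp [hnil]
  | of_succ k hk ih =>
    intro x hx
    have hfx : φN (fh x) = 0 := by
      refine (bNh.map_eq_zero_iff_of_map_basis bN φN hφN _).2 fun j => (hker _).2 ?_
      exact hann k hk _ (by simpa using congr(bNh.repr $hx j))
    have hφx : φM x = 0 := hf (by rw [← hcomm, hfx, map_zero])
    obtain ⟨y, rfl⟩ := bMh.exists_eq_smul_of_forall_dvd_repr fun i =>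
      (hker _).1 ((bMh.map_eq_zero_iff_of_map_basis bM φM hφM x).1 hφx i)
    rw [smul_smul, ← pow_succ] at hx ⊢
    exact ih y hx

namespace AugRing

variable {p : ℕ}

noncomputable def t (p : ℕ) : AugRing p := Ideal.Quotient.mk _ X

theorem one_sub_t (p : ℕ) : 1 - t p = Ideal.Quotient.mk _ (1 - X) := by
  simp [t]

theorem comp_mk_eq_evalRingHom {ε : AugRing p →+* ZMod p} (hε : ε (t p) = 1) :
    ε.comp (Ideal.Quotient.mk _) = evalRingHom 1 :=
  ringHom_ext' (RingHom.ext_zmod _ _) <| by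
    rw [RingHom.comp_apply, coe_evalRingHom, eval_X]
    exact hε

theorem apply_eq_zero_iff_one_sub_t_dvd {ε : AugRing p →+* ZMod p} (hε : ε (t p) = 1)
    (c : AugRing p) : ε c = 0 ↔ 1 - t p ∣ c := by
  refine ⟨fun h => ?_, fun ⟨d, hd⟩ => ?_⟩
  · obtain ⟨q, rfl⟩ := Ideal.Quotient.mk_surjective c
    rw [← RingHom.comp_apply, comp_mk_eq_evalRingHom hε, coe_evalRingHom,
      ← one_sub_X_dvd_iff] at h
    exact one_sub_t p ▸ map_dvd _ h
  · rw [hd, map_mul, map_sub, map_one, hε, sub_self, zero_mul]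

variable [Fact p.Prime]

theorem one_sub_t_pow_prime : (1 - t p) ^ p = 0 := by
  rw [one_sub_t, ← map_pow, one_sub_X_pow_char p, Ideal.Quotient.eq_zero_iff_mem]
  exact Ideal.mem_span_singleton_self _

theorem one_sub_t_dvd_of_pow_mul_eq_zero {k : ℕ} (hk : k < p) {c : AugRing p}
    (h : (1 - t p) ^ k * c = 0) : 1 - t p ∣ c := by
  obtain ⟨q, rfl⟩ := Ideal.Quotient.mk_surjective c
  rw [one_sub_t, ← map_pow, ← map_mul, Ideal.Quotient.eq_zero_iff_mem, Ideal.mem_span_singleton,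
    ← one_sub_X_pow_char p] at h
  have hne : (1 - X : (ZMod p)[X]) ^ k ≠ 0 :=
    pow_ne_zero _ fun h0 => X_sub_C_ne_zero (1 : ZMod p) (by rw [C_1, ← neg_sub, h0, neg_zero])
  rw [one_sub_t]
  have hdvd : (1 - X) ^ k * (1 - X) ∣ (1 - X) ^ k * q := by
    rw [← pow_succ]
    exact (pow_dvd_pow _ hk).trans h
  exact map_dvd _ ((mul_dvd_mul_iff_left hne).1 hdvd)

end AugRing

theorem stmt12 (p : ℕ) (hp : p.Prime)
    {ι κ : Type} {Mh Nh M N : Type}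
    [AddCommGroup Mh] [Module (AugRing p) Mh]
    [AddCommGroup Nh] [Module (AugRing p) Nh]
    [AddCommGroup M] [Module (ZMod p) M]
    [AddCommGroup N] [Module (ZMod p) N]
    (bMh : Module.Basis ι (AugRing p) Mh) (bNh : Module.Basis κ (AugRing p) Nh)
    (bM : Module.Basis ι (ZMod p) M) (bN : Module.Basis κ (ZMod p) N)
    (ε : AugRing p →+* ZMod p)
    (hε : ε (Ideal.Quotient.mk _ Polynomial.X) = 1)
    (φM : Mh →ₛₗ[ε] M) (φN : Nh →ₛₗ[ε] N)
    (hφM : ∀ i : ι, φM (bMh i) = bM i) (hφN : ∀ j : κ, φN (bNh j) = bN j)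
    (f : M →ₗ[ZMod p] N) (fh : Mh →ₗ[AugRing p] Nh)
    (hcomm : ∀ x : Mh, φN (fh x) = f (φM x))
    (hf : Function.Injective f) :
    Function.Injective fh := by
  have := Fact.mk hp
  exact LinearMap.injective_of_injective_reduction (AugRing.apply_eq_zero_iff_one_sub_t_dvd hε)
    AugRing.one_sub_t_pow_prime (fun _ hk _ => AugRing.one_sub_t_dvd_of_pow_mul_eq_zero hk)
    bMh bNh bM bN φM φN hφM hφN f fh hcomm hf
end
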